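/- arXiv:1306.0093 — 6 statements merged into one kernel-verified Lean document; each statement's English description precedes it below -/
import Mathlib

section
/- For real symmetric matrices A and B of order n, and any 1 ≤ k ≤ n, the sum of the k largest eigenvalues of A+B is at most the sum of the k largest eigenvalues of A plus the sum of the k largest eigenvalues of B. -/
open Matrix

/-- Sum of the `k` largest entries of a finitely-indexed family of reals. -/
noncomputable def sumKLargest {V : Type*} [Fintype V] (v : V → ℝ) (k : ℕ) : ℝ :=
  (((Finset.univ.val.map v).toList.mergeSort (fun a b => decide (b ≤ a))).take k).sum

/-!
Ky Fan's maximum principle. If `M = U D Uᵀ` with `U` orthogonal, then for any orthogonal `W`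
the diagonal entry `(Wᵀ M W)ᵢᵢ` is `∑ⱼ Qᵢⱼ² λⱼ` with `Q = Wᵀ U` orthogonal, so summing over a set
`S` of `k` rows gives `∑ⱼ tⱼ λⱼ` with weights `0 ≤ tⱼ ≤ 1` of total mass `k`; such a combination
is at most the sum of the `k` largest `λⱼ`. Choosing `W` to diagonalize `A + B` and `S` to index
the `k` largest eigenvalues of `A + B` makes the left-hand side of the theorem equal to
`∑_{i ∈ S} (Wᵀ A W)ᵢᵢ + ∑_{i ∈ S} (Wᵀ B W)ᵢᵢ`.
-/

open Finset

section SumKLargest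

variable {V : Type*} [Fintype V]

theorem sumKLargest_eq_sort (v : V → ℝ) (k : ℕ) :
    sumKLargest v k = (((univ.val.map v).sort (· ≥ ·)).take k).sum := by
  conv_rhs => rw [← Multiset.coe_toList (univ.val.map v), Multiset.coe_sort]
  rfl

theorem sumKLargest_eq_sum_of_antitone {m : ℕ} (v : V → ℝ) (e : Fin m ≃ V)
    (he : Antitone (v ∘ e)) (k : ℕ) :
    sumKLargest v k = ∑ j with j.val < k, v (e j) := by
  have hsort : (univ.val.map v).sort (· ≥ ·) = List.ofFn (v ∘ e) := by
    rw [← Multiset.map_univ_val_equiv e, Multiset.map_map, Fin.univ_val_map, Multiset.coe_sort]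
    exact List.mergeSort_of_pairwise (List.pairwise_ofFn.mpr fun _ _ h => by simpa using he h.le)
  rw [sumKLargest_eq_sort, hsort, List.sum_take_ofFn]
  rfl

theorem exists_equiv_antitone (v : V → ℝ) : ∃ e : Fin (Fintype.card V) ≃ V, Antitone (v ∘ e) := by
  let f : Fin (Fintype.card V) → ℝᵒᵈ := OrderDual.toDual ∘ v ∘ (Fintype.equivFin V).symm
  exact ⟨(Tuple.sort f).trans (Fintype.equivFin V).symm, fun i j hij => Tuple.monotone_sort f hij⟩

theorem exists_threshold_sum_eq_sumKLargest (v : V → ℝ) {k : ℕ} (hk0 : 0 < k)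
    (hk : k ≤ Fintype.card V) :
    ∃ (S : Finset V) (θ : ℝ), #S = k ∧ ∑ i ∈ S, v i = sumKLargest v k ∧
      (∀ i ∈ S, θ ≤ v i) ∧ ∀ i ∉ S, v i ≤ θ := by
  obtain ⟨e, he⟩ := exists_equiv_antitone v
  let T : Finset (Fin (Fintype.card V)) := {j | j.val < k}
  have hT : ∀ j, j ∈ T ↔ j.val < k := by simp [T]
  refine ⟨T.map e.toEmbedding, v (e ⟨k - 1, by omega⟩), ?_, ?_, ?_, ?_⟩
  · rw [card_map, Fin.card_filter_val_lt, min_eq_right hk]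
  · rw [sum_map, sumKLargest_eq_sum_of_antitone v e he]
    rfl
  · intro i hi
    rw [mem_map_equiv, hT] at hi
    simpa using he (show e.symm i ≤ ⟨k - 1, _⟩ by simp only [Fin.le_def]; omega)
  · intro i hi
    rw [mem_map_equiv, hT] at hi
    simpa using he (show ⟨k - 1, _⟩ ≤ e.symm i by simp only [Fin.le_def]; omega)

theorem sum_mul_le_sum_of_threshold (v t : V → ℝ) (S : Finset V) (θ : ℝ)
    (hS : ∀ i ∈ S, θ ≤ v i) (hSc : ∀ i ∉ S, v i ≤ θ) (ht0 : ∀ i, 0 ≤ t i) (ht1 : ∀ i, t i ≤ 1)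
    (ht : ∑ i, t i = #S) : ∑ i, t i * v i ≤ ∑ i ∈ S, v i := by
  classical
  let s : V → ℝ := fun i => if i ∈ S then 1 else 0
  have hgap : ∑ i ∈ S, v i - ∑ i, t i * v i = ∑ i, (s i - t i) * (v i - θ) := by
    have hs : ∑ i, s i = #S := by simp [s]
    have hsv : ∑ i, s i * v i = ∑ i ∈ S, v i := by simp [s]
    simp only [sub_mul, mul_sub, sum_sub_distrib, ← sum_mul, hs, ht, hsv]
    ring
  have hterm : ∀ i, 0 ≤ (s i - t i) * (v i - θ) := fun i => by
    by_cases hi : i ∈ S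
    · simp only [s, hi, if_true]
      exact mul_nonneg (sub_nonneg.2 (ht1 i)) (sub_nonneg.2 (hS i hi))
    · simp only [s, hi, if_false, zero_sub]
      exact mul_nonneg_of_nonpos_of_nonpos (neg_nonpos.2 (ht0 i)) (sub_nonpos.2 (hSc i hi))
  linarith [sum_nonneg fun i (_ : i ∈ univ) => hterm i]

theorem sum_mul_le_sumKLargest (v t : V → ℝ) {k : ℕ} (hk0 : 0 < k) (hk : k ≤ Fintype.card V)
    (ht0 : ∀ i, 0 ≤ t i) (ht1 : ∀ i, t i ≤ 1) (ht : ∑ i, t i = k) :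
    ∑ i, t i * v i ≤ sumKLargest v k := by
  obtain ⟨S, θ, hcard, hsum, hS, hSc⟩ := exists_threshold_sum_eq_sumKLargest v hk0 hk
  rw [← hsum]
  exact sum_mul_le_sum_of_threshold v t S θ hS hSc ht0 ht1 (hcard ▸ ht)

end SumKLargest

namespace Matrix

variable {n : Type*} [Fintype n] [DecidableEq n] {Q : Matrix n n ℝ}

theorem sum_sq_col_eq_one_of_mem_unitaryGroup (hQ : Q ∈ unitaryGroup n ℝ) (j : n) :
    ∑ i, Q i j ^ 2 = 1 := by
  simpa [mul_apply, sq] using congrFun₂ (mem_unitaryGroup_iff'.mp hQ) j j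

theorem sum_sq_row_eq_one_of_mem_unitaryGroup (hQ : Q ∈ unitaryGroup n ℝ) (i : n) :
    ∑ j, Q i j ^ 2 = 1 := by
  simpa [mul_apply, sq] using congrFun₂ (mem_unitaryGroup_iff.mp hQ) i i

theorem mul_diagonal_mul_star_apply_self (Q : Matrix n n ℝ) (d : n → ℝ) (i : n) :
    (Q * diagonal d * star Q) i i = ∑ j, Q i j ^ 2 * d j := by
  rw [mul_apply]
  simp only [mul_diagonal, star_apply, star_trivial]
  exact sum_congr rfl fun j _ => by ring

theorem IsHermitian.star_mul_mul_apply_self {M : Matrix n n ℝ} (hM : M.IsHermitian)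
    (W : Matrix n n ℝ) (i : n) :
    (star W * M * W) i i =
      ∑ j, ((star W * hM.eigenvectorUnitary) i j) ^ 2 * hM.eigenvalues j := by
  have hconj : star W * M * W = (star W * hM.eigenvectorUnitary) * diagonal hM.eigenvalues *
      star (star W * hM.eigenvectorUnitary) := by
    conv_lhs => rw [hM.spectral_theorem, Unitary.conjStarAlgAut_apply]
    simp [Matrix.mul_assoc]
  rw [hconj, mul_diagonal_mul_star_apply_self]

theorem IsHermitian.sum_star_mul_mul_apply_self_le_sumKLargest {M : Matrix n n ℝ}
    (hM : M.IsHermitian) {W : Matrix n n ℝ} (hW : W ∈ unitaryGroup n ℝ) {S : Finset n}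
    (hS : S.Nonempty) :
    ∑ i ∈ S, (star W * M * W) i i ≤ sumKLargest hM.eigenvalues #S := by
  set Q := star W * (hM.eigenvectorUnitary : Matrix n n ℝ)
  have hQ : Q ∈ unitaryGroup n ℝ := mul_mem (Unitary.star_mem hW) hM.eigenvectorUnitary.2
  have hcol (j : n) : ∑ i ∈ S, Q i j ^ 2 ≤ 1 :=
    (sum_le_sum_of_subset_of_nonneg (subset_univ S) fun i _ _ => sq_nonneg _).trans_eq
      (sum_sq_col_eq_one_of_mem_unitaryGroup hQ j)
  have htotal : ∑ j, ∑ i ∈ S, Q i j ^ 2 = #S := by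
    rw [sum_comm]
    simp [sum_sq_row_eq_one_of_mem_unitaryGroup hQ]
  calc ∑ i ∈ S, (star W * M * W) i i = ∑ i ∈ S, ∑ j, Q i j ^ 2 * hM.eigenvalues j :=
        sum_congr rfl fun i _ => hM.star_mul_mul_apply_self W i
    _ = ∑ j, (∑ i ∈ S, Q i j ^ 2) * hM.eigenvalues j := by
        rw [sum_comm]
        simp only [sum_mul]
    _ ≤ sumKLargest hM.eigenvalues #S :=
        sum_mul_le_sumKLargest _ _ hS.card_pos (card_le_univ S)
          (fun j => sum_nonneg fun i _ => sq_nonneg _) hcol htotal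

end Matrix

/-- For real symmetric matrices `A` and `B` of order `n`, and any `1 ≤ k ≤ n`,
the sum of the `k` largest eigenvalues of `A + B` is at most the sum of the `k` largest
eigenvalues of `A` plus the sum of the `k` largest eigenvalues of `B`. -/
theorem sum_k_largest_eigenvalues_add {n : ℕ} (A B : Matrix (Fin n) (Fin n) ℝ)
    (hA : A.IsHermitian) (hB : B.IsHermitian) (k : ℕ) (hk1 : 1 ≤ k) (hkn : k ≤ n) :
    sumKLargest (hA.add hB).eigenvalues k ≤
      sumKLargest hA.eigenvalues k + sumKLargest hB.eigenvalues k := by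
  set hC := hA.add hB
  set W := (hC.eigenvectorUnitary : Matrix (Fin n) (Fin n) ℝ)
  have hdiag : star W * (A + B) * W = diagonal hC.eigenvalues := by
    simpa using hC.conjStarAlgAut_star_eigenvectorUnitary
  obtain ⟨S, -, rfl, hsum, -, -⟩ :=
    exists_threshold_sum_eq_sumKLargest hC.eigenvalues hk1 (by simpa using hkn)
  have hS : S.Nonempty := card_pos.mp hk1
  calc sumKLargest hC.eigenvalues #S = ∑ i ∈ S, (star W * (A + B) * W) i i := by
        simp [← hsum, hdiag]
    _ = ∑ i ∈ S, (star W * A * W) i i + ∑ i ∈ S, (star W * B * W) i i := by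
        simp only [mul_add, add_mul, Matrix.add_apply, sum_add_distrib]
    _ ≤ sumKLargest hA.eigenvalues #S + sumKLargest hB.eigenvalues #S :=
        add_le_add (hA.sum_star_mul_mul_apply_self_le_sumKLargest hC.eigenvectorUnitary.2 hS)
          (hB.sum_star_mul_mul_apply_self_le_sumKLargest hC.eigenvectorUnitary.2 hS)
end

section
/- Let G be a graph with clique number ω. Then for any 1 ≤ k ≤ ω, the sum of the k largest signless Laplacian eigenvalues of G satisfies S⁺_k(G) ≤ 2e(G) − ω² + (k+2)ω − 2k. -/
open Matrix Polynomial

open Classical in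
/-- The signless Laplacian matrix `Q(G) = D(G) + A(G)` of a simple graph. -/
noncomputable def signlessLap {V : Type*} [Fintype V] [DecidableEq V]
    (G : SimpleGraph V) : Matrix V V ℝ :=
  G.degMatrix ℝ + G.adjMatrix ℝ

theorem signlessLap_isHermitian {V : Type*} [Fintype V] [DecidableEq V]
    (G : SimpleGraph V) : (signlessLap G).IsHermitian := by
  classical
  ext i j
  by_cases h : i = j
  · subst h; simp [signlessLap]
  · simp [signlessLap, Matrix.conjTranspose_apply, SimpleGraph.degMatrix,
      Matrix.diagonal_apply, h, Ne.symm h, SimpleGraph.adj_comm]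

/-- `S⁺_k(G)`: the sum of the `k` largest signless Laplacian eigenvalues of `G`. -/
noncomputable def Splus {V : Type*} [Fintype V] [DecidableEq V]
    (G : SimpleGraph V) (k : ℕ) : ℝ :=
  sumKLargest (signlessLap_isHermitian G).eigenvalues k

/-- `e(G)`: the number of edges of `G`. -/
noncomputable def numEdges {V : Type*} (G : SimpleGraph V) : ℕ := G.edgeSet.ncard

/-!
For `x` supported on an `ω`-clique, `xᵀ Q(G) x ≥ (ω - 2) ‖x‖²`: the degrees there are at least
`ω - 1` and the adjacency part of the form equals `(∑ xᵥ)² - ∑ xᵥ²`. By the min-max principle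
`Q(G)` then has at least `ω` eigenvalues `≥ ω - 2`. All eigenvalues are nonnegative and sum to
`tr Q(G) = 2e(G)`, and the `n - k` eigenvalues outside the `k` largest include at least `ω - k`
of those, so `S⁺_k(G) ≤ 2e(G) - (ω - k)(ω - 2)`.
-/

open Finset

theorem List.countP_mul_le_sum {l : List ℝ} (hl : ∀ a ∈ l, 0 ≤ a) (c : ℝ) :
    (l.countP (c ≤ ·) : ℝ) * c ≤ l.sum := by
  induction l with
  | nil => simp
  | cons a l ih =>
    have ha := hl a List.mem_cons_self
    have hl' := ih fun b hb => hl b (List.mem_cons_of_mem a hb)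
    by_cases hca : c ≤ a
    · simp only [List.countP_cons, hca, decide_true, if_true, List.sum_cons]
      push_cast; linarith
    · simp only [List.countP_cons, hca, decide_false, List.sum_cons]
      push_cast; linarith

theorem List.sum_take_le_sum_sub {l : List ℝ} (hl : ∀ a ∈ l, 0 ≤ a) {c : ℝ} {k m : ℕ}
    (hkm : k ≤ m) (hm : m ≤ l.countP (c ≤ ·)) :
    (l.take k).sum ≤ l.sum - (m - k) * c := by
  have hdrop : ((m : ℝ) - k) * c ≤ (l.drop k).sum := by
    have hnonneg : ∀ a ∈ l.drop k, 0 ≤ a := fun a ha => hl a (List.mem_of_mem_drop ha)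
    rcases le_or_gt 0 c with hc | hc
    · have hcount : m - k ≤ (l.drop k).countP (c ≤ ·) := by
        have := List.countP_append (p := (c ≤ ·)) (l₁ := l.take k) (l₂ := l.drop k)
        rw [List.take_append_drop] at this
        have := (l.take k).countP_le_length (p := (c ≤ ·))
        have := l.length_take_le k
        omega
      calc ((m : ℝ) - k) * c = ((m - k : ℕ) : ℝ) * c := by rw [Nat.cast_sub hkm]
        _ ≤ ((l.drop k).countP (c ≤ ·) : ℝ) * c := by gcongr
        _ ≤ (l.drop k).sum := List.countP_mul_le_sum hnonneg c
    · have : (0 : ℝ) ≤ (m : ℝ) - k := by rw [sub_nonneg]; exact_mod_cast hkm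
      nlinarith [List.sum_nonneg hnonneg]
  linarith [List.sum_take_add_sum_drop l k]

theorem sumKLargest_le_sum_sub {V : Type*} [Fintype V] {v : V → ℝ} (hv : ∀ i, 0 ≤ v i)
    {c : ℝ} {k m : ℕ} (hkm : k ≤ m) (hm : m ≤ #{i | c ≤ v i}) :
    sumKLargest v k ≤ ∑ i, v i - (m - k) * c := by
  set l := (univ.val.map v).toList.mergeSort (fun a b => decide (b ≤ a))
  have hperm : l.Perm (univ.val.map v).toList := List.mergeSort_perm _ _
  have hsum : l.sum = ∑ i, v i := by
    rw [hperm.sum_eq, Multiset.sum_toList]; rfl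
  have hcount : l.countP (c ≤ ·) = #{i | c ≤ v i} := by
    rw [hperm.countP_eq, ← Multiset.coe_countP, Multiset.coe_toList, Multiset.countP_map]
    rfl
  have hnonneg : ∀ a ∈ l, 0 ≤ a := by
    intro a ha
    obtain ⟨i, -, rfl⟩ := Multiset.mem_map.mp (Multiset.mem_toList.mp (hperm.mem_iff.mp ha))
    exact hv i
  rw [← hsum]
  exact List.sum_take_le_sum_sub hnonneg hkm (hcount ▸ hm)

namespace Matrix.IsHermitian

variable {n : Type*} [Fintype n] [DecidableEq n] {A : Matrix n n ℝ} (hA : A.IsHermitian)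

theorem star_eigenvectorUnitary_eq_transpose :
    star (hA.eigenvectorUnitary : Matrix n n ℝ) = (hA.eigenvectorUnitary : Matrix n n ℝ)ᵀ := by
  rw [star_eq_conjTranspose, conjTranspose_eq_transpose_of_trivial]

theorem dotProduct_self_eq_sum_sq_star_eigenvectorUnitary_mulVec (x : n → ℝ) :
    x ⬝ᵥ x = ∑ i, (star (hA.eigenvectorUnitary : Matrix n n ℝ) *ᵥ x) i ^ 2 := by
  set U : Matrix n n ℝ := (hA.eigenvectorUnitary : Matrix n n ℝ)
  have hU : U * star U = 1 := Unitary.mul_star_self_of_mem hA.eigenvectorUnitary.2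
  calc x ⬝ᵥ x = (star U *ᵥ x) ᵥ* star U ⬝ᵥ x := by
        rw [hA.star_eigenvectorUnitary_eq_transpose, vecMul_transpose, mulVec_mulVec,
          ← hA.star_eigenvectorUnitary_eq_transpose, hU, one_mulVec]
    _ = ∑ i, (star U *ᵥ x) i ^ 2 := by
        rw [← dotProduct_mulVec]; simp [dotProduct, sq]

theorem dotProduct_mulVec_eq_sum_eigenvalues_mul_sq (x : n → ℝ) :
    x ⬝ᵥ A *ᵥ x =
      ∑ i, hA.eigenvalues i * (star (hA.eigenvectorUnitary : Matrix n n ℝ) *ᵥ x) i ^ 2 := by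
  conv_lhs => rw [hA.spectral_theorem, Unitary.conjStarAlgAut_apply]
  rw [← mulVec_mulVec, ← mulVec_mulVec, dotProduct_mulVec, ← mulVec_transpose,
    ← hA.star_eigenvectorUnitary_eq_transpose]
  simp only [dotProduct, mulVec_diagonal, Function.comp_apply, RCLike.ofReal_real_eq_id, id]
  exact sum_congr rfl fun i _ => by ring

/-- The easy half of the Courant–Fischer min-max principle. -/
theorem finrank_le_card_eigenvalues_ge {c : ℝ} (W : Submodule ℝ (n → ℝ))
    (hW : ∀ x ∈ W, c * (x ⬝ᵥ x) ≤ x ⬝ᵥ A *ᵥ x) :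
    Module.finrank ℝ W ≤ #{i | c ≤ hA.eigenvalues i} := by
  set T : Finset n := {i | c ≤ hA.eigenvalues i}
  by_contra! hlt
  let f : W →ₗ[ℝ] T → ℝ := (LinearMap.funLeft ℝ ℝ ((↑) : T → n)).comp
    ((mulVecLin (star (hA.eigenvectorUnitary : Matrix n n ℝ))).comp W.subtype)
  obtain ⟨⟨x, hxW⟩, hker, hx0⟩ := Submodule.exists_mem_ne_zero_of_ne_bot <|
    LinearMap.ker_ne_bot_of_finrank_lt (f := f) (by simpa [Module.finrank_fintype_fun_eq_card])
  set z := star (hA.eigenvectorUnitary : Matrix n n ℝ) *ᵥ x with hz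
  have hzT : ∀ i ∈ T, z i = 0 := fun i hi => congrFun hker ⟨i, hi⟩
  have hz0 : z ≠ 0 := by
    intro h
    refine hx0 (Subtype.ext (dotProduct_self_eq_zero.mp ?_))
    rw [hA.dotProduct_self_eq_sum_sq_star_eigenvectorUnitary_mulVec, ← hz, h]
    simp
  have hlt : x ⬝ᵥ A *ᵥ x < c * (x ⬝ᵥ x) := by
    rw [hA.dotProduct_mulVec_eq_sum_eigenvalues_mul_sq,
      hA.dotProduct_self_eq_sum_sq_star_eigenvectorUnitary_mulVec, mul_sum, ← hz]
    obtain ⟨j, hj⟩ := Function.ne_iff.mp hz0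
    have hjT : j ∉ T := fun h => hj (hzT j h)
    refine sum_lt_sum (fun i _ => ?_) ⟨j, mem_univ j, ?_⟩
    · by_cases hi : i ∈ T
      · simp [hzT i hi]
      · exact mul_le_mul_of_nonneg_right (by simp [T] at hi; exact hi.le) (sq_nonneg _)
    · exact mul_lt_mul_of_pos_right (by simpa [T] using hjT) (pow_two_pos_of_ne_zero hj)
  exact (hW x hxW).not_gt hlt

end Matrix.IsHermitian

namespace SimpleGraph

variable {V : Type*} {G : SimpleGraph V}

theorem IsNClique.le_degree_add_one [Fintype V] [DecidableRel G.Adj] {n : ℕ} {s : Finset V}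
    (hs : G.IsNClique n s) {v : V} (hv : v ∈ s) : n ≤ G.degree v + 1 := by
  classical
  have hsub : s.erase v ⊆ G.neighborFinset v := fun u hu =>
    (G.mem_neighborFinset v u).mpr <|
      hs.isClique hv (mem_of_mem_erase hu) (ne_of_mem_erase hu).symm
  have := card_le_card hsub
  rw [card_erase_of_mem hv, hs.card_eq, card_neighborFinset_eq_degree] at this
  omega

variable [Fintype V] [DecidableEq V]

theorem posSemidef_signlessLap : (signlessLap G).PosSemidef := by
  classical
  have hinc : signlessLap G = G.incMatrix ℝ * (G.incMatrix ℝ)ᴴ := by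
    rw [conjTranspose_eq_transpose_of_trivial, incMatrix_mul_transpose]
    ext a b
    by_cases h : a = b
    · subst h; simp [signlessLap, degMatrix]
    · simp [signlessLap, degMatrix, h]
  exact hinc ▸ posSemidef_self_mul_conjTranspose _

theorem trace_signlessLap : (signlessLap G).trace = 2 * numEdges G := by
  classical
  rw [signlessLap, trace_add, trace_adjMatrix, add_zero, degMatrix, trace_diagonal,
    ← Nat.cast_sum, sum_degrees_eq_twice_card_edges, numEdges, ← coe_edgeFinset,
    Set.ncard_coe_finset]
  push_cast
  -- the two sides carry different `Fintype G.edgeSet` instances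
  congr 3

theorem IsNClique.mul_dotProduct_le_signlessLap {n : ℕ} {s : Finset V} (hs : G.IsNClique n s)
    {x : V → ℝ} (hx : ∀ v ∉ s, x v = 0) :
    ((n : ℝ) - 2) * (x ⬝ᵥ x) ≤ x ⬝ᵥ signlessLap G *ᵥ x := by
  classical
  have hdeg : ((n : ℝ) - 1) * (x ⬝ᵥ x) ≤ ∑ v, G.degree v * x v * x v := by
    rw [dotProduct, mul_sum]
    refine sum_le_sum fun v _ => ?_
    by_cases hv : v ∈ s
    · have : (n : ℝ) ≤ G.degree v + 1 := by exact_mod_cast hs.le_degree_add_one hv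
      nlinarith [mul_self_nonneg (x v)]
    · simp [hx v hv]
  have hadj : x ⬝ᵥ G.adjMatrix ℝ *ᵥ x = (∑ v, x v) * (∑ v, x v) - x ⬝ᵥ x := by
    have hentry : ∀ u v, (if G.Adj u v then x u * x v else 0) =
        x u * x v - if u = v then x u * x v else 0 := by
      intro u v
      by_cases huv : u = v
      · simp [huv]
      by_cases hu : u ∈ s
      · by_cases hv : v ∈ s
        · simp [hs.isClique hu hv huv, huv]
        · simp [hx v hv]
      · simp [hx u hu]
    rw [dotProduct_mulVec_adjMatrix, sum_mul_sum, dotProduct, ← sum_sub_distrib]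
    refine sum_congr rfl fun u _ => ?_
    simp only [hentry, sum_sub_distrib, sum_ite_eq, mem_univ, if_true]
  rw [signlessLap, add_mulVec, dotProduct_add, dotProduct_mulVec_degMatrix, hadj]
  nlinarith [mul_self_nonneg (∑ v, x v)]

theorem IsNClique.le_card_signlessLap_eigenvalues_ge {n : ℕ} {s : Finset V}
    (hs : G.IsNClique n s) :
    n ≤ #{i | (n : ℝ) - 2 ≤ (signlessLap_isHermitian G).eigenvalues i} := by
  let extend := Function.ExtendByZero.linearMap ℝ ((↑) : s → V)
  have hW := (signlessLap_isHermitian G).finrank_le_card_eigenvalues_ge (c := (n : ℝ) - 2)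
    (LinearMap.range extend) <| by
      rintro _ ⟨z, rfl⟩
      exact hs.mul_dotProduct_le_signlessLap fun v hv =>
        Function.extend_apply' _ _ _ fun ⟨a, ha⟩ => hv (ha ▸ a.2)
  rwa [LinearMap.finrank_range_of_inj
      (Function.extend_injective Subtype.val_injective (0 : V → ℝ)),
    Module.finrank_fintype_fun_eq_card, Fintype.card_coe, hs.card_eq] at hW

end SimpleGraph

theorem splus_le_of_cliqueNum_general {V : Type*} [Fintype V] [DecidableEq V]
    (G : SimpleGraph V) (ω : ℕ) (hω : G.cliqueNum = ω)
    (k : ℕ) (hkω : k ≤ ω) :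
    Splus G k ≤ 2 * (numEdges G : ℝ) - (ω : ℝ) ^ 2 + ((k : ℝ) + 2) * ω - 2 * k := by
  obtain ⟨s, hs⟩ := G.exists_isNClique_cliqueNum
  rw [hω] at hs
  have hQ := signlessLap_isHermitian G
  have hsum : ∑ i, hQ.eigenvalues i = 2 * numEdges G := by
    simp [← SimpleGraph.trace_signlessLap (G := G), hQ.trace_eq_sum_eigenvalues]
  calc Splus G k ≤ ∑ i, hQ.eigenvalues i - (ω - k) * ((ω : ℝ) - 2) :=
        sumKLargest_le_sum_sub SimpleGraph.posSemidef_signlessLap.eigenvalues_nonneg hkω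
          hs.le_card_signlessLap_eigenvalues_ge
    _ = _ := by rw [hsum]; ring

/-- If `G` has clique number `ω`, then for any `1 ≤ k ≤ ω`,
`S⁺_k(G) ≤ 2e(G) − ω² + (k+2)ω − 2k`. -/
theorem splus_le_of_cliqueNum {V : Type*} [Fintype V] [DecidableEq V]
    (G : SimpleGraph V) (ω : ℕ) (hω : G.cliqueNum = ω)
    (k : ℕ) (hk1 : 1 ≤ k) (hkω : k ≤ ω) :
    Splus G k ≤ 2 * (numEdges G : ℝ) - (ω : ℝ) ^ 2 + ((k : ℝ) + 2) * ω - 2 * k :=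
  splus_le_of_cliqueNum_general G ω hω k hkω
end

section
/- Let G be a graph with maximum degree Δ. Then for any 1 ≤ k ≤ Δ, the sum of the k largest signless Laplacian eigenvalues of G satisfies S⁺_k(G) ≤ 2e(G) − Δ + k. -/
open Matrix Polynomial

/-!
Let `c` be a vertex of maximum degree `Δ` and let `S` be the star formed by the edges at `c`.
Then `Q(G) = Q(S) + Q(G - S)` with both summands positive semidefinite. Take orthonormal
eigenvectors `uᵢ` of `Q(G)` for the `k` largest eigenvalues. The numbers `uᵢᵀ Q(G - S) uᵢ` are
nonnegative, so their sum over `k` indices is at most their sum over all indices, which is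
`tr Q(G - S) = 2e(G) - 2Δ`. For the star, `Q(S) ≤ I + w wᵀ / (Δ + 1)` where `w = Δ e_c + 1_{N(c)}`
is its top eigenvector, with `‖w‖² = Δ (Δ + 1)`; Bessel's inequality then bounds the sum of the
`uᵢᵀ Q(S) uᵢ` by `k + Δ`.
-/

lemma exists_card_le_sumKLargest_eq_sum {V : Type*} [Fintype V] (v : V → ℝ) (k : ℕ) :
    ∃ t : Finset V, t.card ≤ k ∧ sumKLargest v k = ∑ i ∈ t, v i := by
  classical
  set sorted := (Finset.univ.val.map v).toList.mergeSort (fun a b => decide (b ≤ a))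
  have hperm : sorted.Perm (Finset.univ.toList.map v) := by
    refine (List.mergeSort_perm _ _).trans (Multiset.coe_eq_coe.mp ?_)
    rw [Multiset.coe_toList, ← Multiset.map_coe, Finset.coe_toList]
  obtain ⟨l, hl, hsub⟩ := (List.take_sublist k sorted).subperm.trans hperm.subperm
  obtain ⟨l', hl', rfl⟩ := List.sublist_map_iff.mp hsub
  have hnodup : l'.Nodup := hl'.nodup (Finset.nodup_toList _)
  refine ⟨l'.toFinset, ?_, ?_⟩
  · rw [List.toFinset_card_of_nodup hnodup, ← List.length_map (f := v), hl.length_eq]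
    exact List.length_take_le _ _
  · rw [List.sum_toFinset _ hnodup, hl.sum_eq]
    rfl

section SignlessLaplacian

open scoped RealInnerProductSpace

variable {V ι : Type*} [Fintype V] [DecidableEq V] (G : SimpleGraph V) [DecidableRel G.Adj]

lemma signlessLap_eq : signlessLap G = G.degMatrix ℝ + G.adjMatrix ℝ := by
  unfold signlessLap
  congr!

lemma trace_signlessLap : (signlessLap G).trace = 2 * (numEdges G : ℝ) := by
  rw [signlessLap_eq, Matrix.trace_add, SimpleGraph.trace_adjMatrix, add_zero, numEdges,
    ← G.coe_edgeFinset, Set.ncard_coe_finset]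
  simpa [Matrix.trace, SimpleGraph.degMatrix] using
    congrArg (Nat.cast : ℕ → ℝ) G.sum_degrees_eq_twice_card_edges

lemma two_mul_dotProduct_signlessLap_mulVec (x : V → ℝ) :
    2 * (x ⬝ᵥ signlessLap G *ᵥ x) =
      ∑ a, ∑ b, if G.Adj a b then (x a + x b) ^ 2 else 0 := by
  simp_rw [signlessLap_eq, add_mulVec, dotProduct_add, SimpleGraph.dotProduct_mulVec_degMatrix,
    SimpleGraph.dotProduct_mulVec_adjMatrix, SimpleGraph.degree_eq_sum_if_adj, Finset.sum_mul,
    ← Finset.sum_add_distrib, ite_mul, one_mul, zero_mul, ite_add_ite, add_zero]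
  rw [two_mul]
  nth_rw 2 [Finset.sum_comm]
  simp_rw [← Finset.sum_add_distrib]
  refine Fintype.sum_congr _ _ fun a => Fintype.sum_congr _ _ fun b => ?_
  by_cases hab : G.Adj a b
  · simp only [hab, hab.symm, if_true]
    ring
  · simp [hab, G.adj_comm b a]

/-- The quadratic form of the signless Laplacian of the star formed by the edges at `c`. -/
noncomputable def starForm (c : V) (x : V → ℝ) : ℝ := ∑ b ∈ G.neighborFinset c, (x c + x b) ^ 2

lemma starForm_le_dotProduct_signlessLap_mulVec (c : V) (x : V → ℝ) :
    starForm G c x ≤ x ⬝ᵥ signlessLap G *ᵥ x := by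
  set g : V → V → ℝ := fun a b => if G.Adj a b then (x a + x b) ^ 2 else 0
  have hg : ∀ a b, 0 ≤ g a b := fun a b => by positivity
  have hrow : ∑ b, g c b = starForm G c x := by
    simp [g, starForm, SimpleGraph.neighborFinset_eq_filter, Finset.sum_filter]
  have hcol : ∑ a ∈ Finset.univ.erase c, g a c = starForm G c x := by
    rw [Finset.sum_erase _ (by simp [g]), ← hrow]
    refine Fintype.sum_congr _ _ fun a => ?_
    simp only [g, G.adj_comm a c, add_comm]
  have hdouble : starForm G c x * 2 ≤ 2 * (x ⬝ᵥ signlessLap G *ᵥ x) := calc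
    starForm G c x * 2 = ∑ b, g c b + ∑ a ∈ Finset.univ.erase c, g a c := by
        rw [hrow, hcol, mul_two]
    _ ≤ ∑ b, g c b + ∑ a ∈ Finset.univ.erase c, ∑ b, g a b := by
        gcongr with a
        exact Finset.single_le_sum (fun b _ => hg a b) (Finset.mem_univ c)
    _ = ∑ a, ∑ b, g a b :=
        Finset.add_sum_erase _ (fun a => ∑ b, g a b) (Finset.mem_univ c)
    _ = 2 * (x ⬝ᵥ signlessLap G *ᵥ x) := (two_mul_dotProduct_signlessLap_mulVec G x).symm
  linarith

lemma starForm_mul_le (c : V) (x : V → ℝ) :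
    (G.degree c + 1) * starForm G c x ≤
      (G.degree c + 1) * ∑ a, x a ^ 2 + (G.degree c * x c + ∑ b ∈ G.neighborFinset c, x b) ^ 2 := by
  have hsum : x c ^ 2 + ∑ b ∈ G.neighborFinset c, x b ^ 2 ≤ ∑ a, x a ^ 2 := by
    rw [← Finset.sum_insert (f := fun a => x a ^ 2) (G.notMem_neighborFinset_self c)]
    exact Finset.sum_le_univ_sum_of_nonneg fun a => sq_nonneg (x a)
  have hexpand : starForm G c x = G.degree c * x c ^ 2 +
      2 * x c * ∑ b ∈ G.neighborFinset c, x b + ∑ b ∈ G.neighborFinset c, x b ^ 2 := by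
    simp only [starForm, add_sq, Finset.sum_add_distrib, Finset.sum_const, Finset.mul_sum,
      nsmul_eq_mul, G.card_neighborFinset_eq_degree]
  rw [hexpand]
  nlinarith [sq_nonneg (x c - ∑ b ∈ G.neighborFinset c, x b)]

noncomputable def starVector (c : V) : EuclideanSpace ℝ V :=
  (G.degree c : ℝ) • EuclideanSpace.single c 1 + ∑ b ∈ G.neighborFinset c, EuclideanSpace.single b 1

lemma inner_starVector (c : V) (x : EuclideanSpace ℝ V) :
    ⟪starVector G c, x⟫ = G.degree c * x c + ∑ b ∈ G.neighborFinset c, x b := by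
  simp [starVector, inner_add_left, inner_smul_left, sum_inner, EuclideanSpace.inner_single_left]

lemma norm_starVector_sq (c : V) : ‖starVector G c‖ ^ 2 = G.degree c * (G.degree c + 1) := by
  have hc : starVector G c c = G.degree c := by
    simp [starVector, G.notMem_neighborFinset_self c]
  have hb : ∀ b ∈ G.neighborFinset c, starVector G c b = 1 := fun b hb => by
    have hbc : b ≠ c := fun h => G.notMem_neighborFinset_self c (h ▸ hb)
    simp [starVector, hbc, hb]
  rw [← real_inner_self_eq_norm_sq, inner_starVector, hc, Finset.sum_congr rfl hb,
    Finset.sum_const, G.card_neighborFinset_eq_degree, nsmul_eq_mul]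
  ring

lemma sum_starForm_le {u : ι → EuclideanSpace ℝ V} (hu : Orthonormal ℝ u) (c : V)
    (t : Finset ι) : ∑ i ∈ t, starForm G c (u i) ≤ t.card + G.degree c := by
  have hbessel : ∑ i ∈ t, ⟪starVector G c, u i⟫ ^ 2 ≤ G.degree c * (G.degree c + 1) := by
    rw [← norm_starVector_sq]
    simpa [real_inner_comm] using hu.sum_inner_products_le (s := t) (starVector G c)
  have hterm : ∀ i, (G.degree c + 1) * starForm G c (u i) ≤
      (G.degree c + 1) * 1 + ⟪starVector G c, u i⟫ ^ 2 := fun i => by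
    have hnorm : ∑ a, u i a ^ 2 = 1 := by
      rw [← EuclideanSpace.real_norm_sq_eq, hu.1 i, one_pow]
    have := starForm_mul_le G c (u i)
    rwa [hnorm, ← inner_starVector] at this
  have hsum := Finset.sum_le_sum fun i (_ : i ∈ t) => hterm i
  rw [← Finset.mul_sum, Finset.sum_add_distrib, Finset.sum_const, nsmul_eq_mul] at hsum
  refine le_of_mul_le_mul_left ?_ (by positivity : (0 : ℝ) < G.degree c + 1)
  linarith

lemma sum_starForm_orthonormalBasis [Fintype ι] (b : OrthonormalBasis ι ℝ (EuclideanSpace ℝ V))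
    (c : V) : ∑ i, starForm G c (b i) = 2 * G.degree c := by
  have hedge : ∀ v ∈ G.neighborFinset c, ∑ i, (b i c + b i v) ^ 2 = 2 := fun v hv => by
    have hcv : c ≠ v := fun h => G.notMem_neighborFinset_self c (h ▸ hv)
    have hparseval := b.sum_sq_inner_right (EuclideanSpace.single c 1 + EuclideanSpace.single v 1)
    norm_num [inner_add_right, EuclideanSpace.inner_single_right, norm_add_sq_real, hcv] at hparseval
    exact hparseval
  unfold starForm
  rw [Finset.sum_comm, Finset.sum_congr rfl hedge, Finset.sum_const,
    G.card_neighborFinset_eq_degree, nsmul_eq_mul, mul_comm]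

lemma sum_eigenvalues_signlessLap_le (c : V) (t : Finset V) :
    ∑ i ∈ t, (signlessLap_isHermitian G).eigenvalues i ≤
      t.card + 2 * (numEdges G : ℝ) - G.degree c := by
  set hQ := signlessLap_isHermitian G
  set u := hQ.eigenvectorBasis
  have hev : ∀ i, hQ.eigenvalues i = u i ⬝ᵥ signlessLap G *ᵥ u i := fun i => by
    simpa using hQ.eigenvalues_eq i
  have hrest : ∀ i, 0 ≤ hQ.eigenvalues i - starForm G c (u i) := fun i => by
    rw [hev, sub_nonneg]
    exact starForm_le_dotProduct_signlessLap_mulVec G c (u i)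
  have htrace : ∑ i, hQ.eigenvalues i = 2 * (numEdges G : ℝ) := by
    rw [← trace_signlessLap, hQ.trace_eq_sum_eigenvalues]
    rfl
  calc ∑ i ∈ t, hQ.eigenvalues i
      = ∑ i ∈ t, starForm G c (u i) + ∑ i ∈ t, (hQ.eigenvalues i - starForm G c (u i)) := by
        rw [← Finset.sum_add_distrib]
        simp
    _ ≤ (t.card + G.degree c) + ∑ i, (hQ.eigenvalues i - starForm G c (u i)) :=
        add_le_add (sum_starForm_le G u.orthonormal c t) (Finset.sum_le_univ_sum_of_nonneg hrest)
    _ = t.card + 2 * (numEdges G : ℝ) - G.degree c := by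
        rw [Finset.sum_sub_distrib, htrace, sum_starForm_orthonormalBasis]
        ring

lemma splus_le_sub_degree (c : V) (k : ℕ) :
    Splus G k ≤ 2 * (numEdges G : ℝ) - G.degree c + k := by
  obtain ⟨t, htk, ht⟩ := exists_card_le_sumKLargest_eq_sum (signlessLap_isHermitian G).eigenvalues k
  have htk' : (t.card : ℝ) ≤ k := by exact_mod_cast htk
  rw [Splus, ht]
  linarith [sum_eigenvalues_signlessLap_le G c t]

end SignlessLaplacian

/-- If `G` has maximum degree `Δ`, then for any `1 ≤ k ≤ Δ`,
`S⁺_k(G) ≤ 2e(G) − Δ + k`. -/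
theorem splus_le_of_maxDegree {V : Type*} [Fintype V] [DecidableEq V]
    (G : SimpleGraph V) [DecidableRel G.Adj] (Δ : ℕ) (hΔ : G.maxDegree = Δ)
    (k : ℕ) (hk1 : 1 ≤ k) (hkΔ : k ≤ Δ) :
    Splus G k ≤ 2 * (numEdges G : ℝ) - (Δ : ℝ) + k := by
  have : Nonempty V := by
    by_contra hV
    have hzero := G.maxDegree_le_of_forall_degree_le 0 fun v => (hV ⟨v⟩).elim
    omega
  obtain ⟨c, hc⟩ := G.exists_maximal_degree_vertex
  rw [← hΔ, hc]
  exact splus_le_sub_degree G c k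
end

section
/- Let G be a connected graph with n vertices and let k be an integer with (3n−4+√(8n²e(G)−8n³+9n²−8n+16))/(2n) ≤ k ≤ n. Then S⁺_k(G) ≤ e(G) + k(k+1)/2. -/
open Matrix Polynomial

/-!
Write the signless Laplacian as `Q = M Mᵀ`, with `M` the vertex–edge incidence matrix. For an
orthonormal eigenbasis `(u t)` this gives `∑_{t ∈ S} λ_t = ∑_e ∑_{t ∈ S} ⟨M e, u t⟩²`, and
Bessel's inequality bounds each edge term by `‖M e‖² = 2`; hence `S⁺_k(G) ≤ 2 e(G)`, which settles
the case `k (k + 1) ≥ 2 e(G)`.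

Otherwise `G` has an edge, so being connected it has a spanning star forest. The edges of a star
`K_{1,a}` are handled together: Bessel's inequality for its Perron vector shows that they
contribute at most twice the mass of the `u t` on the star plus `a - 1`, instead of `2 a`. Summing
over the stars gives `S⁺_k(G) ≤ 2 e(G) + 2 k - n`. Squared out, the hypothesis on `k` says
`2 e(G) ≤ k² - 3 k + 2 n + 4 (k - 1) / n`; since `k² - 3 k` is even and `k (k + 1) < 2 e(G)`, this
forces `2 e(G) ≤ k² - 3 k + 2 n`, which turns the last bound into the claim.
-/

open Finset

lemma exists_finset_card_le_sumKLargest_eq {V : Type*} [Fintype V] (v : V → ℝ) (k : ℕ) :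
    ∃ S : Finset V, #S ≤ k ∧ sumKLargest v k = ∑ i ∈ S, v i := by
  classical
  set L := (Finset.univ.val.map v).toList.mergeSort (fun a b => decide (b ≤ a))
  have hL : L.Perm ((Finset.univ : Finset V).toList.map v) := by
    refine (List.mergeSort_perm _ _).trans ?_
    rw [← Multiset.coe_eq_coe, Multiset.coe_toList, ← Multiset.map_coe, Finset.coe_toList]
  obtain ⟨l, hl, hsub⟩ := ((L.take_sublist k).subperm).trans hL.subperm
  obtain ⟨idx, hidx, rfl⟩ := List.sublist_map_iff.mp hsub
  have hnodup : idx.Nodup := hidx.nodup (Finset.nodup_toList _)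
  refine ⟨idx.toFinset, ?_, ?_⟩
  · rw [List.toFinset_card_of_nodup hnodup, ← List.length_map (f := v), hl.length_eq]
    exact List.length_take_le k L
  · rw [List.sum_toFinset v hnodup, hl.sum_eq]
    rfl

/-- `Q(K_{1,a})` has the eigenvalue `a + 1` on `w = a e_c + ∑ e_v` and eigenvalues `1` and `0`
on `w⊥`, so `Q(K_{1,a}) ≤ 2 I + (a - 1) / (a² + a) w wᵀ`. -/
lemma sum_sq_add_le {V : Type*} (x : V → ℝ) (c : V) {L : Finset V} (hL : L.Nonempty) :
    ∑ v ∈ L, (x v + x c) ^ 2 ≤ 2 * (x c ^ 2 + ∑ v ∈ L, x v ^ 2)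
      + (#L - 1) / (#L ^ 2 + #L) * (#L * x c + ∑ v ∈ L, x v) ^ 2 := by
  have ha : (1 : ℝ) ≤ #L := by exact_mod_cast hL.card_pos
  have hCS : (∑ v ∈ L, x v) ^ 2 ≤ #L * ∑ v ∈ L, x v ^ 2 := sq_sum_le_card_mul_sum_sq
  have hexp : ∑ v ∈ L, (x v + x c) ^ 2
      = ∑ v ∈ L, x v ^ 2 + 2 * x c * ∑ v ∈ L, x v + #L * x c ^ 2 := by
    have h : ∀ v, (x v + x c) ^ 2 = x v ^ 2 + 2 * x c * x v + x c ^ 2 := fun v => by ring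
    simp only [h, sum_add_distrib, ← mul_sum, sum_const, nsmul_eq_mul]
  rw [hexp, div_mul_eq_mul_div, ← sub_nonneg]
  generalize (#L : ℝ) = a, ∑ v ∈ L, x v = T, ∑ v ∈ L, x v ^ 2 = P, x c = y at *
  have hpos : 0 < a ^ 2 + a := by positivity
  have key : 2 * (y ^ 2 + P) + (a - 1) * (a * y + T) ^ 2 / (a ^ 2 + a) - (P + 2 * y * T + a * y ^ 2)
      = ((a + 1) * (a * P - T ^ 2) + 2 * a * (y - T) ^ 2) / (a ^ 2 + a) := by
    field_simp
    ring
  rw [key]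
  have : 0 ≤ a * P - T ^ 2 := by linarith
  positivity

section Orthonormal

variable {ι V : Type*} [Fintype ι] [Fintype V] (u : OrthonormalBasis ι ℝ (EuclideanSpace ℝ V))
  (S : Finset ι)

lemma OrthonormalBasis.sum_sq_dotProduct_le (w : V → ℝ) :
    ∑ t ∈ S, (w ⬝ᵥ u t) ^ 2 ≤ w ⬝ᵥ w := by
  have h := u.orthonormal.sum_inner_products_le (x := WithLp.toLp 2 w) (s := S)
  simp only [EuclideanSpace.inner_eq_star_dotProduct, Real.norm_eq_abs, sq_abs,
    ← real_inner_self_eq_norm_sq] at h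
  simpa [dotProduct_comm] using h

lemma OrthonormalBasis.dotProduct_self (t : ι) : ⇑(u t) ⬝ᵥ ⇑(u t) = 1 := by
  have h := real_inner_self_eq_norm_sq (u t)
  rw [u.orthonormal.1 t, EuclideanSpace.inner_eq_star_dotProduct] at h
  simpa using h

variable [DecidableEq V]

lemma OrthonormalBasis.sum_sum_sq_add_le {c : V} {L : Finset V} (hc : c ∉ L) (hL : L.Nonempty) :
    ∑ t ∈ S, ∑ v ∈ L, (u t v + u t c) ^ 2
      ≤ 2 * ∑ t ∈ S, (u t c ^ 2 + ∑ v ∈ L, u t v ^ 2) + (#L - 1) := by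
  set w : V → ℝ := (#L : ℝ) • Pi.single c 1 + ∑ v ∈ L, Pi.single v 1
  have hw : ∀ x : V → ℝ, w ⬝ᵥ x = #L * x c + ∑ v ∈ L, x v := by
    intro x
    simp [w, add_dotProduct, smul_dotProduct, sum_dotProduct, single_dotProduct]
  have hww : w ⬝ᵥ w = #L ^ 2 + #L := by
    have hwc : w c = #L := by simp [w, Pi.single_apply, hc]
    have hwL : ∀ v ∈ L, w v = 1 := fun v hv => by
      simp [w, Pi.single_apply, hv, ne_of_mem_of_not_mem hv hc]
    rw [hw, hwc, sum_congr rfl hwL, sum_const, nsmul_one, sq]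
  have hcoef : 0 ≤ ((#L : ℝ) - 1) / (#L ^ 2 + #L) := by
    have : (1 : ℝ) ≤ #L := by exact_mod_cast hL.card_pos
    positivity
  calc ∑ t ∈ S, ∑ v ∈ L, (u t v + u t c) ^ 2
      ≤ ∑ t ∈ S, (2 * (u t c ^ 2 + ∑ v ∈ L, u t v ^ 2)
          + (#L - 1) / (#L ^ 2 + #L) * (w ⬝ᵥ u t) ^ 2) :=
        sum_le_sum fun t _ => (hw (u t)).symm ▸ sum_sq_add_le (u t) c hL
    _ ≤ 2 * ∑ t ∈ S, (u t c ^ 2 + ∑ v ∈ L, u t v ^ 2) + (#L - 1) / (#L ^ 2 + #L) * (w ⬝ᵥ w) := by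
        rw [sum_add_distrib, ← mul_sum, ← mul_sum]
        gcongr
        exact u.sum_sq_dotProduct_le S w
    _ = 2 * ∑ t ∈ S, (u t c ^ 2 + ∑ v ∈ L, u t v ^ 2) + (#L - 1) := by
        rw [hww, div_mul_cancel₀]
        positivity

lemma OrthonormalBasis.sum_filter_ne_sum_sq_add_le {p : V → V} (hp : ∀ v, p (p v) = p v)
    (hleaf : ∀ c, p c = c → ∃ v, v ≠ c ∧ p v = c) :
    ∑ v with p v ≠ v, ∑ t ∈ S, (u t v + u t (p v)) ^ 2
      ≤ 2 * #S + (#{v | p v ≠ v} - #{v | p v = v} : ℝ) := by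
  set L : Finset V := {v | p v ≠ v}
  set C : Finset V := {v | p v = v}
  have hmaps : ∀ v ∈ L, p v ∈ C := fun v _ => by simpa [C] using hp v
  have hnotMem : ∀ c ∈ C, c ∉ ({v ∈ L | p v = c} : Finset V) := by
    intro c hc
    simp_all [L, C]
  have hne : ∀ c ∈ C, ({v ∈ L | p v = c} : Finset V).Nonempty := by
    intro c hc
    obtain ⟨v, hvc, hv⟩ := hleaf c (by simpa [C] using hc)
    exact ⟨v, by simp [L, hv, hvc.symm]⟩
  have hnorm : ∀ t, ∑ c ∈ C, u t c ^ 2 + ∑ v ∈ L, u t v ^ 2 = 1 := by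
    intro t
    rw [sum_filter_add_sum_filter_not, ← (u.dotProduct_self t)]
    simp [dotProduct, sq]
  calc ∑ v ∈ L, ∑ t ∈ S, (u t v + u t (p v)) ^ 2
      = ∑ c ∈ C, ∑ t ∈ S, ∑ v ∈ L with p v = c, (u t v + u t c) ^ 2 := by
        rw [← sum_fiberwise_of_maps_to hmaps]
        refine sum_congr rfl fun c _ => ?_
        rw [sum_comm]
        refine sum_congr rfl fun t _ => sum_congr rfl fun v hv => ?_
        rw [(mem_filter.1 hv).2]
    _ ≤ ∑ c ∈ C, (2 * ∑ t ∈ S, (u t c ^ 2 + ∑ v ∈ L with p v = c, u t v ^ 2)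
          + (#{v ∈ L | p v = c} - 1 : ℝ)) :=
        sum_le_sum fun c hc => u.sum_sum_sq_add_le S (hnotMem c hc) (hne c hc)
    _ = 2 * ∑ t ∈ S, (∑ c ∈ C, u t c ^ 2 + ∑ v ∈ L, u t v ^ 2) + (#L - #C : ℝ) := by
        rw [sum_add_distrib, ← mul_sum, sum_comm, sum_sub_distrib,
          card_eq_sum_card_fiberwise hmaps]
        simp only [sum_add_distrib, sum_fiberwise_of_maps_to hmaps, Nat.cast_sum, sum_const,
          nsmul_one]
    _ = 2 * #S + (#L - #C : ℝ) := by simp [hnorm]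

end Orthonormal

namespace SimpleGraph

lemma numEdges_eq_card_edgeFinset {V : Type*} [Fintype V] {G : SimpleGraph V}
    [DecidableRel G.Adj] : numEdges G = #G.edgeFinset := by
  rw [numEdges, ← coe_edgeFinset, Set.ncard_coe_finset]

section SignlessLaplacian

variable {V : Type*} [Fintype V] [DecidableEq V] (G : SimpleGraph V) [DecidableRel G.Adj]

lemma signlessLap_eq_incMatrix_mul_transpose :
    signlessLap G = G.incMatrix ℝ * (G.incMatrix ℝ)ᵀ := by
  rw [incMatrix_mul_transpose]
  ext a b
  by_cases h : a = b
  · subst h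
    simp only [signlessLap, degMatrix, Matrix.add_apply, diagonal_apply_eq, adjMatrix_apply,
      SimpleGraph.irrefl, if_false, add_zero, of_apply, if_true]
    congr!
  · simp [signlessLap, degMatrix, h]

lemma incMatrix_transpose_mulVec_mk (x : V → ℝ) {v w : V} (h : G.Adj v w) :
    ((G.incMatrix ℝ)ᵀ *ᵥ x) s(v, w) = x v + x w := by
  simp only [mulVec, dotProduct, transpose_apply, incMatrix_apply', mk'_mem_incidenceSet_iff, h,
    true_and, ite_mul, one_mul, zero_mul]
  rw [Fintype.sum_eq_add v w (G.ne_of_adj h) fun i hi => if_neg (not_or.2 hi)]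
  simp

lemma incMatrix_transpose_mulVec_of_notMem_edgeSet (x : V → ℝ) {e : Sym2 V}
    (he : e ∉ G.edgeSet) : ((G.incMatrix ℝ)ᵀ *ᵥ x) e = 0 := by
  simp [mulVec, dotProduct, G.incMatrix_of_notMem_incidenceSet fun h => he h.1]

lemma dotProduct_signlessLap_mulVec (x : V → ℝ) :
    x ⬝ᵥ (signlessLap G *ᵥ x) = ∑ e ∈ G.edgeFinset, ((G.incMatrix ℝ)ᵀ *ᵥ x) e ^ 2 := by
  rw [signlessLap_eq_incMatrix_mul_transpose, ← mulVec_mulVec, dotProduct_mulVec,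
    ← mulVec_transpose, dotProduct]
  simp only [← sq]
  refine (sum_subset (subset_univ _) fun e _ he => ?_).symm
  rw [incMatrix_transpose_mulVec_of_notMem_edgeSet G x (by simpa using he), sq, mul_zero]

lemma eigenvalues_signlessLap_eq_sum_edgeFinset (t : V) :
    (signlessLap_isHermitian G).eigenvalues t = ∑ e ∈ G.edgeFinset,
      ((G.incMatrix ℝ)ᵀ *ᵥ (signlessLap_isHermitian G).eigenvectorBasis t) e ^ 2 := by
  rw [← dotProduct_signlessLap_mulVec, (signlessLap_isHermitian G).mulVec_eigenvectorBasis,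
    dotProduct_smul, OrthonormalBasis.dotProduct_self, smul_eq_mul, mul_one]

lemma sum_sq_incMatrix_transpose_mulVec_le {ι : Type*} [Fintype ι]
    (u : OrthonormalBasis ι ℝ (EuclideanSpace ℝ V)) (S : Finset ι) (e : Sym2 V) :
    ∑ t ∈ S, ((G.incMatrix ℝ)ᵀ *ᵥ u t) e ^ 2 ≤ 2 := by
  calc ∑ t ∈ S, ((G.incMatrix ℝ)ᵀ *ᵥ u t) e ^ 2
      ≤ (G.incMatrix ℝ)ᵀ e ⬝ᵥ (G.incMatrix ℝ)ᵀ e := u.sum_sq_dotProduct_le S _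
    _ = ((G.incMatrix ℝ)ᵀ * G.incMatrix ℝ) e e := rfl
    _ ≤ 2 := by
        classical
        rw [incMatrix_transpose_mul_diag]
        split_ifs <;> norm_num

lemma sum_eigenvalues_signlessLap_eq (S : Finset V) :
    ∑ t ∈ S, (signlessLap_isHermitian G).eigenvalues t = ∑ e ∈ G.edgeFinset,
      ∑ t ∈ S, ((G.incMatrix ℝ)ᵀ *ᵥ (signlessLap_isHermitian G).eigenvectorBasis t) e ^ 2 := by
  simp only [eigenvalues_signlessLap_eq_sum_edgeFinset]
  exact sum_comm

lemma sum_eigenvalues_signlessLap_le_two_mul_card_edgeFinset (S : Finset V) :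
    ∑ t ∈ S, (signlessLap_isHermitian G).eigenvalues t ≤ 2 * #G.edgeFinset := by
  rw [sum_eigenvalues_signlessLap_eq, mul_comm, ← nsmul_eq_mul]
  exact sum_le_card_nsmul _ _ _ fun e _ => G.sum_sq_incMatrix_transpose_mulVec_le _ S e

end SignlessLaplacian

section StarForest

variable {V : Type*} {G : SimpleGraph V}

/-- `p` sends every vertex to the centre of its star in a star forest spanning `G`: the stars are
the fibres of `p` and the centres its fixed points. -/
structure IsStarForestMap (G : SimpleGraph V) (p : V → V) : Prop where
  map_map : ∀ v, p (p v) = p v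
  adj : ∀ v, p v ≠ v → G.Adj v (p v)

structure IsSpanningStarForestMap (G : SimpleGraph V) (p : V → V) : Prop
    extends IsStarForestMap G p where
  exists_leaf : ∀ c, p c = c → ∃ v, v ≠ c ∧ p v = c

lemma isStarForestMap_id : IsStarForestMap G id :=
  ⟨fun _ => rfl, fun _ h => absurd rfl h⟩

variable [Fintype V] [DecidableEq V]

/-- Makes `w` the centre of a star containing `c`, `w`, and also `p w` if `w` was its only leaf. -/
def reattach (p : V → V) (c w : V) : V → V := fun x =>
  if x = c ∨ x = w ∨ (x = p w ∧ ∀ v, p v = p w → v = w ∨ v = p w) then w else p x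

def isolatedCenters (p : V → V) : Finset V := {c | p c = c ∧ ∀ v, p v = c → v = c}

variable {p : V → V} {c w : V}

lemma IsStarForestMap.reattach (hp : IsStarForestMap G p) (hc : ∀ v, p v = c → v = c)
    (hcw : G.Adj c w) : IsStarForestMap G (reattach p c w) := by
  constructor
  · intro x
    unfold SimpleGraph.reattach
    split_ifs with hx hpx hpx
    · rfl
    · exact absurd (Or.inr (Or.inl rfl)) hpx
    · rcases hpx with hpx | hpx | ⟨hpx, hlone⟩
      · exact absurd (hc x hpx) (by tauto)
      · exact hpx.symm
      · rcases hlone x hpx with rfl | rfl <;> tauto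
    · rw [hp.map_map]
  · intro x hx
    unfold SimpleGraph.reattach at hx ⊢
    split_ifs at hx ⊢ with hxT
    · rcases hxT with rfl | rfl | ⟨rfl, -⟩
      · exact hcw
      · exact absurd rfl hx
      · exact (hp.adj w (Ne.symm hx)).symm
    · exact hp.adj x hx

lemma isolatedCenters_reattach_subset (hp : ∀ v, p (p v) = p v) (hc : c ∈ isolatedCenters p)
    (hcw : c ≠ w) : isolatedCenters (reattach p c w) ⊆ (isolatedCenters p).erase c := by
  simp only [isolatedCenters, mem_filter, mem_univ, true_and] at hc
  intro b hb
  simp only [isolatedCenters, mem_erase, mem_filter, mem_univ, true_and] at hb ⊢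
  obtain ⟨hbb, hbfib⟩ := hb
  have hc' : reattach p c w c = w := if_pos (Or.inl rfl)
  have hbc : b ≠ c := by rintro rfl; exact hcw (hc' ▸ hbb).symm
  have hbw : b ≠ w := by rintro rfl; exact hbc (hbfib c hc').symm
  have hbT : ¬(b = c ∨ b = w ∨ (b = p w ∧ ∀ v, p v = p w → v = w ∨ v = p w)) := by
    intro h
    rw [reattach, if_pos h] at hbb
    exact hbw hbb.symm
  have hpb : p b = b := by rwa [reattach, if_neg hbT] at hbb
  refine ⟨hbc, hpb, fun v hv => by_contra fun hvb => ?_⟩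
  by_cases hvT : v = c ∨ v = w ∨ (v = p w ∧ ∀ u, p u = p w → u = w ∨ u = p w)
  · rcases hvT with rfl | rfl | ⟨rfl, -⟩
    · exact hbc (hv.symm.trans hc.1)
    · simp only [hv, true_and, not_or, not_forall] at hbT
      obtain ⟨-, -, u, hu, hun⟩ := hbT
      have huT : ¬(u = c ∨ u = v ∨ (u = p v ∧ ∀ u', p u' = p v → u' = v ∨ u' = p v)) := by
        rintro (rfl | rfl | ⟨rfl, -⟩)
        · exact hbc (hu.symm.trans hc.1)
        · exact hun.1 rfl
        · exact hun.2 hv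
      exact hun.2 (hbfib u (by rw [reattach, if_neg huT, hu]))
    · exact hvb (by rw [← hv, hp])
  · exact hvb (hbfib v (by rw [reattach, if_neg hvT, hv]))

theorem exists_isSpanningStarForestMap (h : ∀ v, ∃ w, G.Adj v w) :
    ∃ p, IsSpanningStarForestMap G p := by
  classical
  obtain ⟨p, hp, hmin⟩ := exists_min_image ({p | IsStarForestMap G p} : Finset (V → V))
    (fun p => #(isolatedCenters p)) ⟨id, by simpa using isStarForestMap_id⟩
  rw [mem_filter] at hp
  refine ⟨p, hp.2, fun c hpc => ?_⟩
  by_contra! hc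
  have hcfib : ∀ v, p v = c → v = c := fun v hv => by_contra fun hvc => hc v hvc hv
  have hcI : c ∈ isolatedCenters p := by simpa [isolatedCenters] using ⟨hpc, hcfib⟩
  obtain ⟨w, hcw⟩ := h c
  have hle := hmin (reattach p c w) (by simpa using hp.2.reattach hcfib hcw)
  have hlt := card_lt_card <|
    (isolatedCenters_reattach_subset hp.2.map_map hcI hcw.ne).trans_ssubset (erase_ssubset hcI)
  omega

variable [DecidableRel G.Adj]

lemma IsStarForestMap.sum_edgeFinset_le (hp : IsStarForestMap G p) (f : Sym2 V → ℝ)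
    (hf : ∀ e ∈ G.edgeFinset, f e ≤ 2) :
    ∑ e ∈ G.edgeFinset, f e
      ≤ 2 * (#G.edgeFinset - #{v | p v ≠ v} : ℝ) + ∑ v with p v ≠ v, f s(v, p v) := by
  set F := ({v | p v ≠ v} : Finset V).image fun v => s(v, p v)
  have hinj : Set.InjOn (fun v => s(v, p v)) ({v | p v ≠ v} : Finset V) := by
    intro v _ w hw h
    simp only [coe_filter, mem_univ, true_and, Set.mem_ofPred_eq, Sym2.eq_iff] at hw h
    rcases h with ⟨h, -⟩ | ⟨-, h⟩
    · exact h
    · exact absurd (by rw [← h, hp.map_map]) hw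
  have hF : F ⊆ G.edgeFinset := by
    simp only [F, image_subset_iff, mem_filter, mem_univ, true_and, mem_edgeFinset, mem_edgeSet]
    exact hp.adj
  have hcard : #F = #{v | p v ≠ v} := card_image_of_injOn hinj
  calc ∑ e ∈ G.edgeFinset, f e = ∑ e ∈ G.edgeFinset \ F, f e + ∑ e ∈ F, f e :=
        (sum_sdiff hF).symm
    _ ≤ #(G.edgeFinset \ F) • 2 + ∑ e ∈ F, f e := by
        gcongr
        exact sum_le_card_nsmul _ _ _ fun e he => hf e (mem_sdiff.1 he).1
    _ = 2 * (#G.edgeFinset - #{v | p v ≠ v} : ℝ) + ∑ v with p v ≠ v, f s(v, p v) := by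
        rw [card_sdiff_of_subset hF, sum_image hinj, nsmul_eq_mul, Nat.cast_sub (card_le_card hF),
          hcard, mul_comm]

theorem IsSpanningStarForestMap.sum_eigenvalues_signlessLap_le (hp : IsSpanningStarForestMap G p)
    (S : Finset V) : ∑ t ∈ S, (signlessLap_isHermitian G).eigenvalues t
      ≤ 2 * #G.edgeFinset + 2 * #S - Fintype.card V := by
  set u := (signlessLap_isHermitian G).eigenvectorBasis
  have hleaves := u.sum_filter_ne_sum_sq_add_le S hp.map_map hp.exists_leaf
  have hcard : (#{v | p v = v} + #{v | p v ≠ v} : ℝ) = Fintype.card V := by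
    exact_mod_cast card_filter_add_card_filter_not (fun v => p v = v)
  have hstar : ∑ v with p v ≠ v, ∑ t ∈ S, ((G.incMatrix ℝ)ᵀ *ᵥ u t) s(v, p v) ^ 2
      = ∑ v with p v ≠ v, ∑ t ∈ S, (u t v + u t (p v)) ^ 2 :=
    sum_congr rfl fun v hv => sum_congr rfl fun t _ => by
      rw [incMatrix_transpose_mulVec_mk G _ (hp.adj v (mem_filter.1 hv).2)]
  rw [sum_eigenvalues_signlessLap_eq]
  refine (hp.sum_edgeFinset_le _ fun e _ => G.sum_sq_incMatrix_transpose_mulVec_le u S e).trans ?_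
  linarith

theorem Connected.sum_eigenvalues_signlessLap_le [Nontrivial V] (hG : G.Connected)
    (S : Finset V) : ∑ t ∈ S, (signlessLap_isHermitian G).eigenvalues t
      ≤ 2 * #G.edgeFinset + 2 * #S - Fintype.card V := by
  obtain ⟨p, hp⟩ := exists_isSpanningStarForestMap hG.preconnected.exists_adj_of_nontrivial
  exact hp.sum_eigenvalues_signlessLap_le S

end StarForest

end SimpleGraph

lemma two_mul_add_three_mul_le_of_sqrt_le {n k m : ℕ} (hn : 0 < n) (hm : k ^ 2 + k < 2 * m)
    (hk : (3 * (n : ℝ) - 4 + √(8 * n ^ 2 * m - 8 * n ^ 3 + 9 * n ^ 2 - 8 * n + 16)) / (2 * n)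
      ≤ k) :
    2 * m + 3 * k ≤ k ^ 2 + 2 * n := by
  have hpoly : (n : ℝ) * (2 * m) ≤ n * (k ^ 2 - 3 * k + 2 * n) + 4 * (k - 1) := by
    rw [div_le_iff₀ (by positivity)] at hk
    have hsqrt := Real.sqrt_le_iff.1 (show √_ ≤ k * (2 * n) - (3 * n - 4) by linarith)
    have hn' : (0 : ℝ) < n := by exact_mod_cast hn
    nlinarith [hsqrt.2]
  have hZ : (n : ℤ) * (2 * m) ≤ n * (k ^ 2 - 3 * k + 2 * n) + 4 * (k - 1) := by
    exact_mod_cast hpoly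
  obtain ⟨i, hi⟩ := Int.even_mul_succ_self (k : ℤ)
  have hk2 : (k : ℤ) ^ 2 = 2 * i - k := by linarith
  by_contra! hlt
  zify at hn hm hlt
  rw [hk2] at hZ hm hlt
  -- `m - i + 2 k - n` is half the excess `2 m - (k² - 3 k + 2 n)`, a positive integer
  have hd1 : 1 ≤ (m : ℤ) - i + 2 * k - n := by omega
  have hd3 : 2 * k - n + 1 ≤ (m : ℤ) - i + 2 * k - n := by omega
  have hnd : (n : ℤ) * (m - i + 2 * k - n) ≤ 2 * k - 2 := by linarith
  nlinarith

theorem splus_le_conjecture_bound_of_large_k_general {n : ℕ} (G : SimpleGraph (Fin n))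
    (hG : G.Connected) (k : ℕ)
    (hk : (3 * (n : ℝ) - 4 + Real.sqrt (8 * n ^ 2 * (numEdges G : ℝ) - 8 * n ^ 3
        + 9 * n ^ 2 - 8 * n + 16)) / (2 * n) ≤ k) :
    Splus G k ≤ (numEdges G : ℝ) + k * (k + 1) / 2 := by
  classical
  obtain ⟨S, hSk, hS⟩ :=
    exists_finset_card_le_sumKLargest_eq (signlessLap_isHermitian G).eigenvalues k
  have hSk' : (#S : ℝ) ≤ k := by exact_mod_cast hSk
  rw [Splus, hS, SimpleGraph.numEdges_eq_card_edgeFinset]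
  rw [SimpleGraph.numEdges_eq_card_edgeFinset] at hk
  rcases le_or_gt (2 * #G.edgeFinset) (k ^ 2 + k) with hsmall | hlarge
  · have hsmall' : (2 * #G.edgeFinset : ℝ) ≤ k ^ 2 + k := by exact_mod_cast hsmall
    linarith [G.sum_eigenvalues_signlessLap_le_two_mul_card_edgeFinset S]
  · have hedges : (2 * #G.edgeFinset + 3 * k : ℝ) ≤ k ^ 2 + 2 * n := by
      exact_mod_cast two_mul_add_three_mul_le_of_sqrt_le (Fin.pos_iff_nonempty.2 hG.nonempty)
        hlarge hk
    obtain ⟨e, he⟩ : G.edgeFinset.Nonempty := card_pos.1 (by omega)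
    have : Nontrivial (Fin n) := by
      induction e using Sym2.ind with
      | h a b => exact (SimpleGraph.mem_edgeFinset.1 he).nontrivial
    have hstars := hG.sum_eigenvalues_signlessLap_le S
    rw [Fintype.card_fin] at hstars
    linarith

/-- For a connected graph `G` with `n` vertices and any integer `k` with
`(3n − 4 + √(8n²e(G) − 8n³ + 9n² − 8n + 16)) / (2n) ≤ k ≤ n`, one has
`S⁺_k(G) ≤ e(G) + k(k+1)/2`. -/
theorem splus_le_conjecture_bound_of_large_k {n : ℕ} (G : SimpleGraph (Fin n))
    (hG : G.Connected) (k : ℕ)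
    (hk : (3 * (n : ℝ) - 4 + Real.sqrt (8 * n ^ 2 * (numEdges G : ℝ) - 8 * n ^ 3
        + 9 * n ^ 2 - 8 * n + 16)) / (2 * n) ≤ k)
    (hkn : k ≤ n) :
    Splus G k ≤ (numEdges G : ℝ) + k * (k + 1) / 2 :=
  splus_le_conjecture_bound_of_large_k_general G hG k hk
end

section
/- Let U¹_n(a,b) be the graph obtained by attaching a and b pendant vertices to two vertices of a triangle, where a + b = n − 3, a ≥ b ≥ 0, a ≥ 2, and n ≥ 5. Then the third largest signless Laplacian eigenvalue of U¹_n(a,b) is strictly less than 2. -/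
open Matrix Polynomial

/-- The `i`-th largest signless Laplacian eigenvalue of `G` (`1`-indexed). -/
noncomputable def qEig {V : Type*} [Fintype V] [DecidableEq V]
    (G : SimpleGraph V) (i : ℕ) : ℝ :=
  ((Finset.univ.val.map (signlessLap_isHermitian G).eigenvalues).toList.mergeSort
      (fun a b => decide (b ≤ a))).getD (i - 1) 0

/-- `U¹_n(a,b)`: a triangle with `a` pendant vertices attached to one of its vertices and
`b` pendant vertices attached to another. -/
def U1 (a b : ℕ) : SimpleGraph (Fin 3 ⊕ (Fin a ⊕ Fin b)) where
  Adj x y := match x, y with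
    | .inl i, .inl j => i ≠ j
    | .inl i, .inr (.inl _) => i = 0
    | .inr (.inl _), .inl i => i = 0
    | .inl i, .inr (.inr _) => i = 1
    | .inr (.inr _), .inl i => i = 1
    | _, _ => False
  symm := by
    constructor
    rintro (i | (p | p)) (j | (q | q)) h <;> first | exact h.symm | exact h | exact h.elim
  loopless := by
    constructor
    rintro (i | (p | p)) h <;> first | exact h rfl | exact h

/-!
Write `x₁, x₂` for the values of `x` at the triangle vertices `1, 2` (vertex `0` carries the `a`
pendants, vertex `1` the `b` pendants) and `pᵢ, q_j` for its values at the pendants. On the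
codimension-two subspace `x₀ = 0`, `(b + 1) x₁ + x₂ = 0` the signless Laplacian form satisfies
`2 ‖x‖² - xᵀ Q x = 2 x₁² + ∑ pᵢ² + ∑ (q_j - x₁)²`, which is positive for `x ≠ 0`. A nonzero vector
in the span of eigenvectors with eigenvalue `≥ 2` cannot lie in that subspace, so at most two
eigenvalues are `≥ 2`, i.e. `q₃ < 2`.
-/

open Finset

theorem List.SortedGE.getD_lt_of_countP_le {α : Type*} [LinearOrder α] {l : List α}
    (hl : l.SortedGE) {k : ℕ} (hk : k < l.length) {t : α}
    (hcount : l.countP (fun x => t ≤ x) ≤ k) (d : α) : l.getD k d < t := by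
  rw [List.getD_eq_getElem _ _ hk]
  by_contra! hle
  have hge : ∀ y ∈ l.take (k + 1), t ≤ y := by
    intro y hy
    obtain ⟨j, hj, rfl⟩ := List.getElem_of_mem hy
    rw [List.length_take] at hj
    rw [List.getElem_take]
    exact hle.trans (hl.getElem_ge_getElem_of_le (by omega))
  have := (List.take_sublist (k + 1) l).countP_le (p := fun x => decide (t ≤ x))
  rw [List.countP_eq_length.mpr (by simpa using hge), List.length_take] at this
  omega

theorem qEig_lt_of_card_le {V : Type*} [Fintype V] [DecidableEq V] (G : SimpleGraph V)
    {k : ℕ} (hk : k < Fintype.card V) {t : ℝ}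
    (h : #{i | t ≤ (signlessLap_isHermitian G).eigenvalues i} ≤ k) : qEig G (k + 1) < t := by
  refine List.sortedGE_mergeSort.getD_lt_of_countP_le (by simpa using hk) ?_ 0
  rw [(List.mergeSort_perm _ _).countP_eq, ← Multiset.coe_countP, Multiset.coe_toList,
    Multiset.countP_map]
  exact h

theorem Matrix.IsHermitian.card_le_finrank_of_dotProduct_mulVec_lt {V F : Type*} [Fintype V]
    [DecidableEq V] [AddCommGroup F] [Module ℝ F] [FiniteDimensional ℝ F] {M : Matrix V V ℝ}
    (hM : M.IsHermitian) (φ : (V → ℝ) →ₗ[ℝ] F) {t : ℝ}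
    (h : ∀ x ∈ LinearMap.ker φ, x ≠ 0 → x ⬝ᵥ M *ᵥ x < t * (x ⬝ᵥ x)) :
    #{i | t ≤ hM.eigenvalues i} ≤ Module.finrank ℝ F := by
  set S : Finset V := {i | t ≤ hM.eigenvalues i}
  let v : S → EuclideanSpace ℝ V := fun i => hM.eigenvectorBasis i
  have hv : Orthonormal ℝ v := hM.eigenvectorBasis.orthonormal.comp _ Subtype.val_injective
  let ψ : (S → ℝ) →ₗ[ℝ] F :=
    φ ∘ₗ (WithLp.linearEquiv 2 ℝ (V → ℝ)).toLinearMap ∘ₗ Fintype.linearCombination ℝ v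
  by_contra! hlt
  obtain ⟨c, hc, hc0⟩ := Submodule.exists_mem_ne_zero_of_ne_bot
    (ψ.ker_ne_bot_of_finrank_lt (by simpa using hlt))
  set x := ∑ i, c i • v i
  have hx0 : x ≠ 0 := fun hx =>
    hc0 (funext (Fintype.linearIndependent_iff.mp hv.linearIndependent c hx))
  have hMx : M *ᵥ x.ofLp = (∑ i, (c i * hM.eigenvalues i) • v i).ofLp := by
    simp [x, v, Matrix.mulVec_sum, Matrix.mulVec_smul, hM.mulVec_eigenvectorBasis, smul_smul]
  have hdot (y z : EuclideanSpace ℝ V) : y.ofLp ⬝ᵥ z.ofLp = inner ℝ z y := rfl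
  have hquad : x.ofLp ⬝ᵥ M *ᵥ x.ofLp = ∑ i, c i * (c i * hM.eigenvalues i) := by
    rw [hMx, hdot, hv.inner_sum]
    exact sum_congr rfl fun i _ => by simp only [conj_trivial]; ring
  have hnorm : x.ofLp ⬝ᵥ x.ofLp = ∑ i, c i * c i := by
    rw [hdot, hv.inner_sum]
    simp
  have hxM := h x.ofLp hc (by simpa using hx0)
  rw [hquad, hnorm, mul_sum] at hxM
  refine hxM.not_ge (sum_le_sum fun i _ => ?_)
  have hi : t ≤ hM.eigenvalues i := (mem_filter.mp i.2).2
  nlinarith [mul_self_nonneg (c i)]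

open Classical in
theorem dotProduct_signlessLap_mulVec {V : Type*} [Fintype V] [DecidableEq V]
    (G : SimpleGraph V) (x : V → ℝ) :
    x ⬝ᵥ signlessLap G *ᵥ x = (∑ i, ∑ j, if G.Adj i j then (x i + x j) ^ 2 else 0) / 2 := by
  simp_rw [signlessLap, add_mulVec, dotProduct_add, SimpleGraph.dotProduct_mulVec_degMatrix,
    SimpleGraph.dotProduct_mulVec_adjMatrix, ← sum_add_distrib, SimpleGraph.degree_eq_sum_if_adj,
    sum_mul, ite_mul, one_mul, zero_mul, ← sum_add_distrib, ite_add_ite, add_zero]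
  rw [← add_self_div_two (∑ i : V, ∑ j : V, _)]
  conv_lhs => enter [1, 2, 2, i, 2, j]; rw [if_congr (G.adj_comm i j) rfl rfl]
  conv_lhs => enter [1, 2]; rw [Finset.sum_comm]
  simp_rw [← sum_add_distrib, ite_add_ite]
  congr 2 with i
  congr 2 with j
  ring_nf

theorem dotProduct_signlessLap_U1_mulVec {a b : ℕ} (x : Fin 3 ⊕ (Fin a ⊕ Fin b) → ℝ)
    (h0 : x (.inl 0) = 0) :
    x ⬝ᵥ signlessLap (U1 a b) *ᵥ x =
      x (.inl 1) ^ 2 + x (.inl 2) ^ 2 + (x (.inl 1) + x (.inl 2)) ^ 2 +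
        ∑ i, x (.inr (.inl i)) ^ 2 + ∑ j, (x (.inl 1) + x (.inr (.inr j))) ^ 2 := by
  rw [dotProduct_signlessLap_mulVec]
  simp only [U1, ne_eq, Fintype.sum_sum_type, Fin.sum_univ_three, h0, add_zero, zero_add,
    not_true_eq_false, not_false_eq_true, ↓reduceIte, zero_ne_one, one_ne_zero, Fin.reduceEq,
    sum_const_zero]
  simp only [add_comm (x (.inr (.inr _))) (x (.inl 1))]
  ring

theorem dotProduct_signlessLap_U1_mulVec_lt {a b : ℕ} {x : Fin 3 ⊕ (Fin a ⊕ Fin b) → ℝ}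
    (hx : x ≠ 0) (h0 : x (.inl 0) = 0) (h12 : (b + 1) * x (.inl 1) + x (.inl 2) = 0) :
    x ⬝ᵥ signlessLap (U1 a b) *ᵥ x < 2 * (x ⬝ᵥ x) := by
  set s := x (.inl 1)
  set p : Fin a → ℝ := fun i => x (.inr (.inl i))
  set q : Fin b → ℝ := fun j => x (.inr (.inr j))
  have hnorm : x ⬝ᵥ x = s ^ 2 + x (.inl 2) ^ 2 + ∑ i, p i ^ 2 + ∑ j, q j ^ 2 := by
    simp only [dotProduct, Fintype.sum_sum_type, Fin.sum_univ_three, h0, mul_zero, zero_add, sq]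
    ring
  have hpar : ∑ j, (s + q j) ^ 2 = 2 * ∑ j, q j ^ 2 + 2 * b * s ^ 2 - ∑ j, (q j - s) ^ 2 := by
    have hterm (j) : (s + q j) ^ 2 = 2 * q j ^ 2 + 2 * s ^ 2 - (q j - s) ^ 2 := by ring
    simp only [hterm, sum_sub_distrib, sum_add_distrib, ← mul_sum, sum_const, card_univ,
      Fintype.card_fin, nsmul_eq_mul]
    ring
  have hgap : 2 * (x ⬝ᵥ x) - x ⬝ᵥ signlessLap (U1 a b) *ᵥ x =
      2 * s ^ 2 + ∑ i, p i ^ 2 + ∑ j, (q j - s) ^ 2 := by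
    rw [dotProduct_signlessLap_U1_mulVec x h0, hnorm, hpar]
    linear_combination (-2 * s) * h12
  suffices hpos : 0 < 2 * s ^ 2 + ∑ i, p i ^ 2 + ∑ j, (q j - s) ^ 2 by linarith
  refine lt_of_le_of_ne (by positivity) fun hzero => hx ?_
  obtain ⟨⟨hs, hp⟩, hq⟩ : (2 * s ^ 2 = 0 ∧ ∑ i, p i ^ 2 = 0) ∧ ∑ j, (q j - s) ^ 2 = 0 := by
    rwa [eq_comm, add_eq_zero_iff_of_nonneg (by positivity) (by positivity),
      add_eq_zero_iff_of_nonneg (by positivity) (by positivity)] at hzero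
  rw [sum_eq_zero_iff_of_nonneg fun _ _ => sq_nonneg _] at hp hq
  have hs : s = 0 := by simpa using hs
  have h2 : x (.inl 2) = 0 := by rw [hs] at h12; linarith
  ext (i | i | j)
  · fin_cases i
    exacts [h0, hs, h2]
  · simpa using hp i (mem_univ i)
  · simpa [hs] using hq j (mem_univ j)

theorem q3_U1_lt_two_general (a b : ℕ) :
    qEig (U1 a b) 3 < 2 := by
  let φ : (Fin 3 ⊕ (Fin a ⊕ Fin b) → ℝ) →ₗ[ℝ] ℝ × ℝ :=
    (LinearMap.proj (.inl 0)).prod ((b + 1 : ℝ) • LinearMap.proj (.inl 1) + LinearMap.proj (.inl 2))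
  have hcount : #{i | 2 ≤ (signlessLap_isHermitian (U1 a b)).eigenvalues i} ≤ 2 := by
    simpa using (signlessLap_isHermitian (U1 a b)).card_le_finrank_of_dotProduct_mulVec_lt φ
      fun x hx hx0 => by
        obtain ⟨h0, h12⟩ := Prod.ext_iff.mp (LinearMap.mem_ker.mp hx)
        exact dotProduct_signlessLap_U1_mulVec_lt hx0 h0 (by simpa [φ] using h12)
  have hcard : 2 < Fintype.card (Fin 3 ⊕ (Fin a ⊕ Fin b)) := by
    simp only [Fintype.card_sum, Fintype.card_fin]
    omega
  exact qEig_lt_of_card_le (U1 a b) hcard hcount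

/-- For `n ≥ 5`, `a ≥ b ≥ 0` and `a ≥ 2`, the third largest signless Laplacian eigenvalue
of `U¹_n(a,b)` (with `a + b = n − 3`) is strictly less than `2`. -/
theorem q3_U1_lt_two (n a b : ℕ) (hn : n = a + b + 3) (hn5 : 5 ≤ n)
    (hba : b ≤ a) (ha : 2 ≤ a) :
    qEig (U1 a b) 3 < 2 :=
  q3_U1_lt_two_general a b
end

section
/- Let G be a connected graph with n vertices consisting of a subgraph H (with at least two vertices) together with n−|H| distinct pendant vertices (not in H) all attached to a single vertex v of H. Then the signless Laplacian characteristic polynomial of G satisfies ψ(G,x) = (x−1)^{n−|H|} ψ(H,x) − (n−|H|) x (x−1)^{n−|H|−1} ψ(Q_v(H),x). -/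
open Matrix Polynomial

/-- The graph obtained from `H` by attaching `p` distinct pendant vertices to the vertex
`v` of `H`. -/
def attachPendants {m : ℕ} (H : SimpleGraph (Fin m)) (v : Fin m) (p : ℕ) :
    SimpleGraph (Fin m ⊕ Fin p) where
  Adj x y := match x, y with
    | .inl a, .inl b => H.Adj a b
    | .inl a, .inr _ => a = v
    | .inr _, .inl a => a = v
    | .inr _, .inr _ => False
  symm := by
    refine ⟨?_⟩
    rintro (a | a) (b | b) h
    · exact SimpleGraph.Adj.symm h
    · exact h
    · exact h
    · exact h.elim
  loopless := by
    refine ⟨?_⟩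
    rintro (a | a) h
    · exact SimpleGraph.irrefl H h
    · exact h

/-! Ordering the vertices as (vertices of `H`, pendants), `xI − Q(G)` is a block matrix with
pendant block `(x − 1)I` and off-diagonal blocks `−e_v 𝟙ᵀ`, `−𝟙 e_vᵀ`. For `x ≠ 1` the Schur
complement of the pendant block is `xI − Q(H) − (p x / (x − 1)) E_vv`, and changing the single
entry `(v, v)` by `t` changes the determinant by `t` times the principal minor at `v`; this gives
`ψ(H,x) − (p x / (x − 1)) ψ(Q_v(H),x)`. Both sides are polynomials that agree at every `x ≠ 1`,
so they are equal. -/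

namespace Matrix

variable {R : Type*} [CommRing R] {n : Type*} [Fintype n] [DecidableEq n]

theorem det_updateRow_single_self (M : Matrix n n R) (v : n) :
    (M.updateRow v (Pi.single v 1)).det =
      (M.submatrix (Subtype.val : {w // w ≠ v} → n) Subtype.val).det := by
  let e : {w // w ≠ v} ⊕ {w // ¬w ≠ v} ≃ n := Equiv.sumCompl _
  have hblocks : (M.updateRow v (Pi.single v 1)).submatrix e e =
      fromBlocks (M.submatrix Subtype.val Subtype.val) (M.submatrix Subtype.val Subtype.val)
        0 1 := by
    ext (i | i) (j | j)
    · simp [e, i.2]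
    · simp [e, i.2]
    · obtain ⟨i, hi⟩ := i
      obtain rfl := not_not.mp hi
      simp [e, j.2]
    · obtain ⟨i, hi⟩ := i
      obtain rfl := not_not.mp hi
      obtain ⟨j, hj⟩ := j
      obtain rfl := not_not.mp hj
      simp [e]
  rw [← det_submatrix_equiv_self e, hblocks, det_fromBlocks_zero₂₁, det_one, mul_one]

theorem det_sub_smul_single (M : Matrix n n R) (v : n) (t : R) :
    (M - t • single v v 1).det =
      M.det - t * (M.submatrix (Subtype.val : {w // w ≠ v} → n) Subtype.val).det := by
  have hrow : M - t • single v v 1 = M.updateRow v (M v + (-t) • Pi.single v 1) := by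
    ext i j
    rcases eq_or_ne i v with rfl | hi
    · rcases eq_or_ne j i with rfl | hj
      · simp [sub_eq_add_neg]
      · simp [hj, hj.symm]
    · simp [updateRow_ne hi, hi.symm]
  rw [hrow, det_updateRow_add, det_updateRow_smul, updateRow_eq_self, det_updateRow_single_self,
    neg_mul, sub_eq_add_neg]

theorem det_fromBlocks_smul_one₂₂ {K : Type*} [Field K] {m : Type*} [Fintype m] [DecidableEq m]
    (A : Matrix m m K) (B : Matrix m n K) (C : Matrix n m K) {c : K} (hc : c ≠ 0) :
    (fromBlocks A B C (c • 1)).det = c ^ Fintype.card n * (A - c⁻¹ • (B * C)).det := by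
  have hfactor :
      fromBlocks A B C (c • 1) = fromBlocks 1 0 0 (c • 1) * fromBlocks A B (c⁻¹ • C) 1 := by
    simp [fromBlocks_multiply, smul_smul, hc]
  rw [hfactor, det_mul, det_fromBlocks_zero₂₁, det_fromBlocks_one₂₂, det_smul, Matrix.mul_smul]
  simp

theorem submatrix_scalar_sub {m : Type*} [Fintype m] [DecidableEq m] (M : Matrix n n R) (x : R)
    {f : m → n} (hf : Function.Injective f) :
    (scalar n x - M).submatrix f f = scalar m x - M.submatrix f f := by
  ext i j
  simp [scalar_apply, diagonal_apply, hf.eq_iff]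

end Matrix

open Classical in
theorem signlessLap_apply {V : Type*} [Fintype V] [DecidableEq V] (G : SimpleGraph V) (i j : V) :
    signlessLap G i j = if i = j then (G.degree i : ℝ) else if G.Adj i j then 1 else 0 := by
  rcases eq_or_ne i j with rfl | h <;> simp [signlessLap, SimpleGraph.degMatrix, *]

namespace SimpleGraph

variable {m : ℕ} {H : SimpleGraph (Fin m)} {v : Fin m} {p : ℕ}

@[simp] theorem attachPendants_adj_inl_inl {a b : Fin m} :
    (attachPendants H v p).Adj (.inl a) (.inl b) ↔ H.Adj a b := Iff.rfl

@[simp] theorem attachPendants_adj_inl_inr {a : Fin m} {j : Fin p} :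
    (attachPendants H v p).Adj (.inl a) (.inr j) ↔ a = v := Iff.rfl

@[simp] theorem attachPendants_adj_inr_inl {a : Fin m} {j : Fin p} :
    (attachPendants H v p).Adj (.inr j) (.inl a) ↔ a = v := Iff.rfl

@[simp] theorem attachPendants_not_adj_inr_inr {i j : Fin p} :
    ¬(attachPendants H v p).Adj (.inr i) (.inr j) := id

theorem attachPendants_degree_inr (j : Fin p)
    [Fintype ((attachPendants H v p).neighborSet (.inr j))] :
    (attachPendants H v p).degree (.inr j) = 1 := by
  rw [← card_neighborFinset_eq_degree, Finset.card_eq_one]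
  refine ⟨.inl v, ?_⟩
  ext (a | a) <;> simp [eq_comm]

theorem attachPendants_degree_inl (a : Fin m) [Fintype (H.neighborSet a)]
    [Fintype ((attachPendants H v p).neighborSet (.inl a))] :
    (attachPendants H v p).degree (.inl a) = H.degree a + if a = v then p else 0 := by
  classical
  have hnbrs : (attachPendants H v p).neighborFinset (.inl a) =
      (H.neighborFinset a).disjSum (if a = v then Finset.univ else ∅) := by
    ext (b | b) <;> split_ifs <;> simp [*]
  rw [← card_neighborFinset_eq_degree, hnbrs, Finset.card_disjSum, card_neighborFinset_eq_degree]
  split_ifs <;> simp [*]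

end SimpleGraph

open SimpleGraph in
theorem signlessLap_attachPendants {m : ℕ} (H : SimpleGraph (Fin m)) (v : Fin m) (p : ℕ) :
    signlessLap (attachPendants H v p) =
      fromBlocks (signlessLap H + (p : ℝ) • single v v 1) (replicateCol (Fin p) (Pi.single v 1))
        (replicateRow (Fin p) (Pi.single v 1)) 1 := by
  classical
  ext (a | a) (b | b)
  · rcases eq_or_ne a b with rfl | hab
    · rcases eq_or_ne v a with rfl | hva
      · simp [signlessLap_apply, attachPendants_degree_inl]
      · simp [signlessLap_apply, attachPendants_degree_inl, single_apply_of_row_ne hva, hva.symm]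
    · have hsingle : single v v (p : ℝ) a b = 0 :=
        single_apply_of_ne _ _ _ _ _ fun h => hab (h.1.symm.trans h.2)
      simp [signlessLap_apply, hab, hsingle]
  · simp [signlessLap_apply, Pi.single_apply]
  · simp [signlessLap_apply, Pi.single_apply]
  · simp [signlessLap_apply, attachPendants_degree_inr, one_apply]

theorem eval_charpoly_signlessLap_attachPendants {m : ℕ} (H : SimpleGraph (Fin m)) (v : Fin m)
    (p : ℕ) {x : ℝ} (hx : x ≠ 1) :
    (signlessLap (attachPendants H v p)).charpoly.eval x =
      (x - 1) ^ p * (scalar _ x - signlessLap H - (p * x / (x - 1)) • single v v 1).det := by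
  set B : Matrix (Fin m) (Fin p) ℝ := replicateCol (Fin p) (Pi.single v 1)
  have hblocks : scalar _ x - fromBlocks (signlessLap H + (p : ℝ) • single v v 1) B Bᵀ 1 =
      fromBlocks (scalar _ x - (signlessLap H + (p : ℝ) • single v v 1)) (-B) (-Bᵀ)
        ((x - 1) • 1) := by
    ext (a | a) (b | b) <;> simp [diagonal_apply, one_apply, sub_smul]
  have hBBt : -B * -Bᵀ = (p : ℝ) • single v v 1 := by
    ext a b
    rcases eq_or_ne a v with rfl | ha
    · rcases eq_or_ne b a with rfl | hb
      · simp [B, mul_apply]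
      · simp [B, mul_apply, hb, single_apply_of_col_ne _ _ hb.symm]
    · simp [B, mul_apply, ha, single_apply_of_row_ne ha.symm]
  have hcoeff : (p : ℝ) + (x - 1)⁻¹ * p = p * x / (x - 1) := by
    field_simp [sub_ne_zero.mpr hx]
    ring
  rw [eval_charpoly, signlessLap_attachPendants, ← transpose_replicateCol, hblocks,
    det_fromBlocks_smul_one₂₂ _ _ _ (sub_ne_zero.mpr hx), Fintype.card_fin, hBBt, ← hcoeff]
  congr 2
  module

theorem charpoly_attachPendants_general {m : ℕ} (H : SimpleGraph (Fin m))
    (v : Fin m) (p : ℕ) :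
    (signlessLap (attachPendants H v p)).charpoly =
      (X - 1) ^ p * (signlessLap H).charpoly -
        C (p : ℝ) * X * (X - 1) ^ (p - 1) *
          ((signlessLap H).submatrix (Subtype.val : {w : Fin m // w ≠ v} → Fin m)
            Subtype.val).charpoly := by
  refine eq_of_infinite_eval_eq _ _ ((Set.finite_singleton 1).infinite_compl.mono fun x hx => ?_)
  rw [Set.mem_ofPred_eq, eval_charpoly_signlessLap_attachPendants H v p hx, det_sub_smul_single,
    submatrix_scalar_sub _ _ Subtype.val_injective, ← eval_charpoly, ← eval_charpoly]
  simp only [eval_sub, eval_mul, eval_pow, eval_C, eval_X, eval_one]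
  obtain _ | k := p
  · simp
  · have hx1 : x - 1 ≠ 0 := sub_ne_zero.mpr hx
    rw [Nat.add_sub_cancel]
    field_simp
    ring

/-- If the connected graph `G` consists of a subgraph `H` (with at least two vertices)
together with `p = n − |H|` pendant vertices attached to the vertex `v` of `H`, then
`ψ(G,x) = (x−1)^p ψ(H,x) − p·x·(x−1)^{p−1} ψ(Q_v(H),x)`, where `ψ` denotes the
characteristic polynomial `det(xI − ·)` and `Q_v(H)` is the principal submatrix of `Q(H)`
obtained by deleting the row and column of `v`. -/
theorem charpoly_attachPendants {m : ℕ} (hm : 2 ≤ m) (H : SimpleGraph (Fin m))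
    (v : Fin m) (p : ℕ) (hp : 1 ≤ p) (hconn : (attachPendants H v p).Connected) :
    (signlessLap (attachPendants H v p)).charpoly =
      (X - 1) ^ p * (signlessLap H).charpoly -
        C (p : ℝ) * X * (X - 1) ^ (p - 1) *
          ((signlessLap H).submatrix (Subtype.val : {w : Fin m // w ≠ v} → Fin m)
            Subtype.val).charpoly :=
  charpoly_attachPendants_general H v p
end
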